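/- arXiv:2209.12819 — 2 statements merged into one kernel-verified Lean document; each statement's English description precedes it below -/
import Mathlib

section
/- Let ℱ be a family of dangers and r ≥ 1 an integer. For every marked hypergraph H with |V(H)∖M(H)| ≥ 2r, the property J_r(ℱ,H) holds if and only if J_1(ℱ^{*(r−1)},H) holds. -/
namespace MB

/-- A marked hypergraph: a finite vertex set, an edge set of finite subsets of vertices,
and a set of marked vertices. -/
structure MarkedHypergraph (V : Type) where
  verts : Finset V
  edges : Finset (Finset V)
  marked : Finset V

namespace MarkedHypergraph

variable {V : Type} [DecidableEq V]

/-- The structural requirements on a marked hypergraph: nonempty vertex set, edges are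
nonempty subsets of the vertex set, marked vertices are vertices. -/
def IsValid (H : MarkedHypergraph V) : Prop :=
  H.verts.Nonempty ∧ (∀ e ∈ H.edges, e ⊆ H.verts ∧ e.Nonempty) ∧ H.marked ⊆ H.verts

/-- `k`-uniformity: every edge has exactly `k` vertices. -/
def IsUniform (H : MarkedHypergraph V) (k : ℕ) : Prop :=
  ∀ e ∈ H.edges, e.card = k

/-- `H^{+x}`: mark the vertex `x`. -/
def plus (H : MarkedHypergraph V) (x : V) : MarkedHypergraph V :=
  ⟨H.verts, H.edges, insert x H.marked⟩

/-- `H^{-y}`: remove the vertex `y` and all edges containing it. -/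
def minus (H : MarkedHypergraph V) (y : V) : MarkedHypergraph V :=
  ⟨H.verts.erase y, H.edges.filter fun e => y ∉ e, H.marked.erase y⟩

/-- `X` is a subhypergraph of `H`. -/
def IsSub (X H : MarkedHypergraph V) : Prop :=
  X.verts ⊆ H.verts ∧ X.edges ⊆ H.edges ∧ X.marked = X.verts ∩ H.marked

/-- A trivial Maker win: some edge has at most one non-marked vertex. -/
def TrivialMakerWin (H : MarkedHypergraph V) : Prop :=
  ∃ e ∈ H.edges, (e \ H.marked).card ≤ 1

theorem card_free_lt (H : MarkedHypergraph V) (x y : V)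
    (hy : y ∈ (H.plus x).verts \ (H.plus x).marked) :
    (((H.plus x).minus y).verts \ ((H.plus x).minus y).marked).card
      < (H.verts \ H.marked).card := by
  have hy' : y ∈ H.verts \ insert x H.marked := hy
  rw [Finset.mem_sdiff] at hy'
  have hyv : y ∈ H.verts := hy'.1
  have hym : y ∉ H.marked := fun h => hy'.2 (Finset.mem_insert_of_mem h)
  show (H.verts.erase y \ (insert x H.marked).erase y).card < (H.verts \ H.marked).card
  calc (H.verts.erase y \ (insert x H.marked).erase y).card
      ≤ ((H.verts \ H.marked).erase y).card := by
        apply Finset.card_le_card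
        intro v hv
        rw [Finset.mem_sdiff, Finset.mem_erase] at hv
        rw [Finset.mem_erase, Finset.mem_sdiff]
        exact ⟨hv.1.1, hv.1.2, fun hvm =>
          hv.2 (Finset.mem_erase.mpr ⟨hv.1.1, Finset.mem_insert_of_mem hvm⟩)⟩
    _ < (H.verts \ H.marked).card :=
        Finset.card_erase_lt_of_mem (Finset.mem_sdiff.mpr ⟨hyv, hym⟩)

/-- Maker win, defined by recursion on the number of non-marked vertices:
if at most one non-marked vertex remains, Maker wins iff the position is a trivial Maker
win; otherwise Maker wins iff he has a pick `x` such that for every answer `y` of Breaker,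
the resulting position is a Maker win. -/
def MakerWin (H : MarkedHypergraph V) : Prop :=
  if (H.verts \ H.marked).card ≤ 1 then TrivialMakerWin H
  else ∃ x ∈ H.verts \ H.marked,
    ∀ y ∈ (H.plus x).verts \ (H.plus x).marked, MakerWin ((H.plus x).minus y)
termination_by (H.verts \ H.marked).card
decreasing_by exact card_free_lt H _ _ (by assumption)

/-- Breaker win: not a Maker win. -/
def BreakerWin (H : MarkedHypergraph V) : Prop := ¬ H.MakerWin

open Classical in
/-- `τ_M(H)`: the minimum number of rounds Maker needs to claim a fully marked edge
(`⊤` if Breaker wins). -/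
noncomputable def tauM (H : MarkedHypergraph V) : ℕ∞ :=
  if TrivialMakerWin H then H.edges.inf fun e => ((e \ H.marked).card : ℕ∞)
  else if (H.verts \ H.marked).card ≤ 1 then (⊤ : ℕ∞)
  else 1 + (H.verts \ H.marked).inf fun x =>
    ((H.plus x).verts \ (H.plus x).marked).attach.sup fun y =>
      tauM ((H.plus x).minus y.1)
termination_by (H.verts \ H.marked).card
decreasing_by exact card_free_lt H _ _ y.2

end MarkedHypergraph

open MarkedHypergraph

variable {V : Type} [DecidableEq V]

/-- The intersection `I_H(𝒳)` of a collection `𝒳` of marked hypergraphs in `H`. -/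
def inter (H : MarkedHypergraph V) (𝒳 : Set (MarkedHypergraph V)) : Set V :=
  {y | y ∈ H.verts ∧ y ∉ H.marked ∧ ∀ X ∈ 𝒳, y ∈ X.verts}

/-- The union of a finite collection of marked hypergraphs. -/
def unionOf (O : Finset (MarkedHypergraph V)) : MarkedHypergraph V :=
  ⟨O.sup MarkedHypergraph.verts, O.sup MarkedHypergraph.edges, O.sup MarkedHypergraph.marked⟩

/-- Isomorphism of pointed marked hypergraphs. -/
def PointedIso (X : MarkedHypergraph V) (x : V) (Y : MarkedHypergraph V) (y : V) : Prop :=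
  ∃ φ : V → V, Set.InjOn φ ↑X.verts ∧ X.verts.image φ = Y.verts ∧
    (∀ e : Finset V, e ⊆ X.verts → (e ∈ X.edges ↔ e.image φ ∈ Y.edges)) ∧
    (∀ v ∈ X.verts, (v ∈ X.marked ↔ φ v ∈ Y.marked)) ∧ φ x = y

/-- `(D,x)` is a danger: `x` is a non-marked vertex and `D^{+x}` is a Maker win. -/
def IsDanger (D : MarkedHypergraph V) (x : V) : Prop :=
  x ∈ D.verts ∧ x ∉ D.marked ∧ (D.plus x).MakerWin

/-- A family of dangers: a set of pointed marked hypergraphs, all of which are dangers. -/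
def IsDangerFamily (F : Set (MarkedHypergraph V × V)) : Prop :=
  ∀ p ∈ F, IsDanger p.1 p.2

/-- The collection of all dangers at `x` in `H`: subhypergraphs `D` of `H` containing `x`
such that `D^{+x}` is a Maker win. -/
def dangersAt (H : MarkedHypergraph V) (x : V) : Set (MarkedHypergraph V) :=
  {D | D.IsValid ∧ D.IsSub H ∧ x ∈ D.verts ∧ (D.plus x).MakerWin}

/-- `xℱ(H)`: the collection of subhypergraphs `X` of `H` containing `x` such that `(X,x)`
is isomorphic to a member of the family `F`. -/
def xFam (F : Set (MarkedHypergraph V × V)) (H : MarkedHypergraph V) (x : V) :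
    Set (MarkedHypergraph V) :=
  {X | X.IsValid ∧ X.IsSub H ∧ x ∈ X.verts ∧ ∃ p ∈ F, PointedIso X x p.1 p.2}

/-- `J F r H` is the property `J_r(ℱ,H)` (for `r ≥ 1`; `J F 0 H` is `True` by convention). -/
def J (F : Set (MarkedHypergraph V × V)) : ℕ → MarkedHypergraph V → Prop
  | 0, _ => True
  | r + 1, H => ∀ x ∈ H.verts \ H.marked,
      ∃ y ∈ inter (H.plus x) (xFam F H x), J F r ((H.plus x).minus y)

/-- `P` is an `ab`-path (in a 3-uniform setting) of length `L`. -/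
def IsPathLen (P : MarkedHypergraph V) (a b : V) (L : ℕ) : Prop :=
  (L = 0 ∧ a = b ∧ P.verts = {a} ∧ P.edges = ∅) ∨
  (1 ≤ L ∧ a ≠ b ∧ ∃ e : ℕ → Finset V,
    P.edges = (Finset.range L).image e ∧
    P.verts = (Finset.range L).biUnion e ∧
    (∀ i, i < L → (e i).card = 3) ∧
    (∀ i j, i < L → j < L → i ≠ j → e i ≠ e j) ∧
    a ∈ e 0 ∧ b ∈ e (L - 1) ∧
    (∀ i, i + 1 < L → (e i ∩ e (i + 1)).card = 1) ∧
    (∀ i j, i + 2 ≤ j → j < L → e i ∩ e j = ∅) ∧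
    (∀ i, 1 ≤ i → i < L → a ∉ e i) ∧
    (∀ i, i + 1 < L → b ∉ e i))

/-- `P` is an `ab`-path. -/
def IsPath (P : MarkedHypergraph V) (a b : V) : Prop := ∃ L, IsPathLen P a b L

/-- `C` is an `a`-cycle of length `L`. -/
def IsCycleLen (C : MarkedHypergraph V) (a : V) (L : ℕ) : Prop :=
  2 ≤ L ∧ ∃ e : ℕ → Finset V,
    C.edges = (Finset.range L).image e ∧
    C.verts = (Finset.range L).biUnion e ∧
    (∀ i, i < L → (e i).card = 3) ∧
    (∀ i j, i < L → j < L → i ≠ j → e i ≠ e j) ∧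
    a ∈ e 0 ∧ a ∈ e (L - 1) ∧
    (∀ i, 0 < i → i + 1 < L → a ∉ e i) ∧
    (L = 2 → (e 0 ∩ e 1).card = 2) ∧
    (3 ≤ L → (e 0 ∩ e (L - 1) = {a} ∧ ∀ i, i + 1 < L → (e i ∩ e (i + 1)).card = 1)) ∧
    (∀ i j, i < j → j < L → 2 ≤ j - i → j - i ≤ L - 2 → e i ∩ e j = ∅)

/-- `C` is an `a`-cycle. -/
def IsCycle (C : MarkedHypergraph V) (a : V) : Prop := ∃ L, IsCycleLen C a L

/-- `T` is an `a`-tadpole: the union of an `ab`-path and a `b`-cycle meeting only at `b`. -/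
def IsTadpole (T : MarkedHypergraph V) (a : V) : Prop :=
  ∃ b P C, IsPath P a b ∧ IsCycle C b ∧ P.verts ∩ C.verts = {b} ∧
    T.verts = P.verts ∪ C.verts ∧ T.edges = P.edges ∪ C.edges

/-- `S` is an `x`-snake: an `xm`-path of positive length with `m` marked. -/
def IsSnake (S : MarkedHypergraph V) (x : V) : Prop :=
  ∃ m L, 1 ≤ L ∧ IsPathLen S x m L ∧ m ∈ S.marked

/-- `N` is a nunchaku: an `ab`-path of positive length with marked set exactly `{a,b}`. -/
def IsNunchaku (N : MarkedHypergraph V) : Prop :=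
  ∃ a b L, 1 ≤ L ∧ IsPathLen N a b L ∧ N.marked = {a, b}

/-- `C` is an `a`-necklace: an `a`-cycle with marked set exactly `{a}`. -/
def IsNecklace (C : MarkedHypergraph V) (a : V) : Prop :=
  ∃ L, IsCycleLen C a L ∧ C.marked = {a}

/-- The family `𝒮` of pointed snakes with exactly one marked vertex. -/
def famS : Set (MarkedHypergraph V × V) := {p | IsSnake p.1 p.2 ∧ p.1.marked.card = 1}

/-- The family `𝒞` of pointed cycles with no marked vertex. -/
def famC : Set (MarkedHypergraph V × V) := {p | IsCycle p.1 p.2 ∧ p.1.marked = ∅}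

/-- The family `𝒯` of pointed tadpoles with no marked vertex. -/
def famT : Set (MarkedHypergraph V × V) := {p | IsTadpole p.1 p.2 ∧ p.1.marked = ∅}

/-- `𝒟₀ = 𝒮 ∪ 𝒞`. -/
def famD0 : Set (MarkedHypergraph V × V) := famS ∪ famC

/-- `𝒟₁ = 𝒮 ∪ 𝒯`. -/
def famD1 : Set (MarkedHypergraph V × V) := famS ∪ famT

/-- `obs(ℱ)`: pointed marked hypergraphs `(D,x)` which, for some `ℱ`-dangerous vertex `z`,
are the union of a collection `𝒪` of subhypergraphs, each of which is (or becomes, once `x`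
is marked) an `ℱ`-danger at `z`, with `I_{D^{+x+z}}(𝒪) = ∅`. -/
def obs (F : Set (MarkedHypergraph V × V)) : Set (MarkedHypergraph V × V) :=
  {p | p.2 ∈ p.1.verts ∧ p.2 ∉ p.1.marked ∧
    ∃ z, z ∈ p.1.verts ∧ z ∉ p.1.marked ∧ z ≠ p.2 ∧
      ∃ O : Set (MarkedHypergraph V),
        (∀ X ∈ O, X.IsValid ∧ X.IsSub p.1) ∧
        (∀ X ∈ O, p.2 ∈ X.verts → X.plus p.2 ∈ xFam F (p.1.plus p.2) z) ∧
        (∀ X ∈ O, p.2 ∉ X.verts → X ∈ xFam F p.1 z) ∧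
        (∀ v ∈ p.1.verts, ∃ X ∈ O, v ∈ X.verts) ∧
        (∀ e ∈ p.1.edges, ∃ X ∈ O, e ∈ X.edges) ∧
        (∀ m ∈ p.1.marked, ∃ X ∈ O, m ∈ X.marked) ∧
        inter ((p.1.plus p.2).plus z) O = ∅}

/-- `obsr(ℱ)`: the members `(D,x)` of `obs(ℱ)` such that `D` contains no `ℱ`-danger at `x`. -/
def obsr (F : Set (MarkedHypergraph V × V)) : Set (MarkedHypergraph V × V) :=
  {p | p ∈ obs F ∧ xFam F p.1 p.2 = ∅}

/-- `ℱ^{*r}`. -/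
def star (F : Set (MarkedHypergraph V × V)) : ℕ → Set (MarkedHypergraph V × V)
  | 0 => F
  | r + 1 => F ∪ obs (star F r)

/-- `𝒟₂ = 𝒟₁ ∪ obsr(𝒟₁)`. -/
def famD2 : Set (MarkedHypergraph V × V) := famD1 ∪ obsr famD1

/-- The lengths of nunchakus contained in `H`. -/
def nunchakuLengths (H : MarkedHypergraph V) : Set ℕ :=
  {L | 1 ≤ L ∧ ∃ N a b, N.IsSub H ∧ IsPathLen N a b L ∧ N.marked = {a, b}}

/-- `H` contains a fully marked edge, a nunchaku, or a necklace. -/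
def WinPattern (H : MarkedHypergraph V) : Prop :=
  (∃ e ∈ H.edges, e ⊆ H.marked) ∨ (∃ N, N.IsSub H ∧ IsNunchaku N) ∨
    (∃ C a, C.IsSub H ∧ IsNecklace C a)

/-- `Wk k H`: Maker can force that after `k` rounds of play the updated marked hypergraph
contains a fully marked edge, a nunchaku or a necklace. -/
def Wk : ℕ → MarkedHypergraph V → Prop
  | 0, H => WinPattern H
  | k + 1, H => ∃ x ∈ H.verts \ H.marked,
      ∀ y ∈ (H.plus x).verts \ (H.plus x).marked, Wk k ((H.plus x).minus y)

end MB

/-!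
Induction on `r`. After Maker claims `x` and Breaker answers `y`, the induction hypothesis
turns `J_r(ℱ, H^{+x-y})` into `J_1(ℱ^{*(r-1)}, H^{+x-y})`, and this holds exactly when `y`
lies on every `ℱ^{*(r-1)}`-obstruction at `x`, which is the extra condition that
`J_1(ℱ^{*r}, H)` imposes at `x`. An obstruction at `x` missed by `y` survives in `H^{+x-y}`,
where its vertex `z` has no safe answer. Conversely, if some `z` has no safe answer in
`H^{+x-y}`, either one of the `ℱ^{*(r-1)}`-dangers at `z` passes through `x`, and then all of
them together, with `x` unmarked, form an obstruction at `x` avoiding `y`; or none does, and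
they are dangers at `z` in `H` itself, so a safe answer to `z` in `H` would be one in
`H^{+x-y}` as well.
-/

namespace MB

open MarkedHypergraph

lemma inter_union {V : Type} {H : MarkedHypergraph V} {𝒳 𝒴 : Set (MarkedHypergraph V)} :
    inter H (𝒳 ∪ 𝒴) = inter H 𝒳 ∩ inter H 𝒴 := by
  ext v
  simp only [inter, Set.mem_inter_iff, Set.mem_ofPred_eq, Set.mem_union, or_imp, forall_and]
  tauto

variable {V : Type} [DecidableEq V] {F F' G G' : Set (MarkedHypergraph V × V)}
  {H X Y D A₀ : MarkedHypergraph V} {x y z : V}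

namespace MarkedHypergraph

@[simp] lemma plus_verts : (H.plus x).verts = H.verts := rfl
@[simp] lemma plus_edges : (H.plus x).edges = H.edges := rfl
@[simp] lemma plus_marked : (H.plus x).marked = insert x H.marked := rfl
@[simp] lemma minus_verts : (H.minus y).verts = H.verts.erase y := rfl
@[simp] lemma minus_marked : (H.minus y).marked = H.marked.erase y := rfl

lemma plus_free : (H.plus x).verts \ (H.plus x).marked = (H.verts \ H.marked).erase x := by
  ext v
  simp only [plus_verts, plus_marked, Finset.mem_sdiff, Finset.mem_insert, Finset.mem_erase]
  tauto

lemma plus_minus_free :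
    ((H.plus x).minus y).verts \ ((H.plus x).minus y).marked =
      ((H.verts \ H.marked).erase x).erase y := by
  ext v
  simp only [minus_verts, minus_marked, plus_verts, plus_marked, Finset.mem_sdiff,
    Finset.mem_erase, Finset.mem_insert]
  tauto

lemma card_plus_minus_free (hx : x ∈ H.verts \ H.marked)
    (hy : y ∈ (H.plus x).verts \ (H.plus x).marked) :
    (((H.plus x).minus y).verts \ ((H.plus x).minus y).marked).card + 2 =
      (H.verts \ H.marked).card := by
  rw [plus_free] at hy
  rw [plus_minus_free, ← Finset.card_erase_add_one hx, ← Finset.card_erase_add_one hy]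

lemma IsValid.plus (hH : H.IsValid) (hx : x ∈ H.verts) : (H.plus x).IsValid :=
  ⟨hH.1, hH.2.1, Finset.insert_subset hx hH.2.2⟩

lemma IsSub.trans (hXY : X.IsSub Y) (hYH : Y.IsSub H) : X.IsSub H := by
  refine ⟨hXY.1.trans hYH.1, hXY.2.1.trans hYH.2.1, ?_⟩
  rw [hXY.2.2, hYH.2.2, ← Finset.inter_assoc, Finset.inter_eq_left.2 hXY.1]

lemma IsSub.of_subset (hX : X.IsSub H) (hD : D.IsSub H) (hv : X.verts ⊆ D.verts)
    (he : X.edges ⊆ D.edges) : X.IsSub D := by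
  refine ⟨hv, he, ?_⟩
  rw [hX.2.2, hD.2.2, ← Finset.inter_assoc, Finset.inter_eq_left.2 hv]

lemma IsSub.plus (h : X.IsSub H) (hx : x ∈ X.verts) : (X.plus x).IsSub (H.plus x) := by
  refine ⟨h.1, h.2.1, ?_⟩
  rw [plus_marked, plus_marked, plus_verts, h.2.2, Finset.inter_insert_of_mem hx]

lemma isSub_plus_iff_of_notMem (hx : x ∉ X.verts) : X.IsSub (H.plus x) ↔ X.IsSub H := by
  simp only [IsSub, plus_verts, plus_edges, plus_marked, Finset.inter_insert_of_notMem hx]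

lemma IsSub.minus (h : X.IsSub H) (hX : ∀ e ∈ X.edges, e ⊆ X.verts) (hy : y ∉ X.verts) :
    X.IsSub (H.minus y) := by
  refine ⟨fun v hv => Finset.mem_erase.2 ⟨ne_of_mem_of_not_mem hv hy, h.1 hv⟩,
    fun e he => Finset.mem_filter.2 ⟨h.2.1 he, fun hye => hy (hX e he hye)⟩, ?_⟩
  rw [minus_marked, h.2.2, Finset.inter_erase, Finset.erase_eq_of_notMem]
  exact fun hy' => hy (Finset.mem_inter.1 hy').1

lemma IsSub.notMem_of_minus (h : X.IsSub (H.minus y)) : y ∉ X.verts :=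
  fun hy => (Finset.mem_erase.1 (h.1 hy)).1 rfl

lemma IsSub.of_minus (h : X.IsSub (H.minus y)) : X.IsSub H := by
  refine ⟨h.1.trans (Finset.erase_subset _ _), h.2.1.trans (Finset.filter_subset _ _), ?_⟩
  rw [h.2.2, minus_marked, Finset.inter_erase, Finset.erase_eq_of_notMem]
  exact fun hy' => h.notMem_of_minus (Finset.mem_inter.1 hy').1

end MarkedHypergraph

lemma xFam_mono (h : F ⊆ F') : xFam F H x ⊆ xFam F' H x :=
  fun _ ⟨hval, hsub, hx, p, hp, hiso⟩ => ⟨hval, hsub, hx, p, h hp, hiso⟩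

lemma xFam_union : xFam (F ∪ F') H x = xFam F H x ∪ xFam F' H x := by
  ext X
  simp only [xFam, Set.mem_ofPred_eq, Set.mem_union, or_and_right, exists_or, and_or_left]

lemma mem_xFam_of_isSub (hX : X ∈ xFam F Y x) (hY : Y.IsSub H) : X ∈ xFam F H x :=
  ⟨hX.1, hX.2.1.trans hY, hX.2.2⟩

lemma J_one_iff :
    J G 1 H ↔ ∀ x ∈ H.verts \ H.marked, (inter (H.plus x) (xFam G H x)).Nonempty := by
  simp only [J, and_true, Set.Nonempty]

lemma obs_mono (h : F ⊆ F') : obs F ⊆ obs F' := by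
  rintro p ⟨hx, hxm, z, hz, hzm, hzx, O, hO, hOx, hOnx, hrest⟩
  exact ⟨hx, hxm, z, hz, hzm, hzx, O, hO, fun X hX hxX => xFam_mono h (hOx X hX hxX),
    fun X hX hxX => xFam_mono h (hOnx X hX hxX), hrest⟩

lemma star_subset_star_succ (F : Set (MarkedHypergraph V × V)) :
    ∀ r, star F r ⊆ star F (r + 1)
  | 0 => Set.subset_union_left
  | r + 1 => Set.union_subset_union_right F (obs_mono (star_subset_star_succ F r))

lemma PointedIso.refl (X : MarkedHypergraph V) (x : V) : PointedIso X x X x :=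
  ⟨id, Set.injOn_id _, Finset.image_id, fun e _ => by rw [Finset.image_id],
    fun _ _ => Iff.rfl, rfl⟩

def IsIsoOn (φ : V → V) (X Y : MarkedHypergraph V) : Prop :=
  Set.InjOn φ X.verts ∧ X.verts.image φ = Y.verts ∧
    (∀ e : Finset V, e ⊆ X.verts → (e ∈ X.edges ↔ e.image φ ∈ Y.edges)) ∧
    ∀ v ∈ X.verts, (v ∈ X.marked ↔ φ v ∈ Y.marked)

lemma pointedIso_iff : PointedIso X x Y y ↔ ∃ φ, IsIsoOn φ X Y ∧ φ x = y :=
  ⟨fun ⟨φ, h₁, h₂, h₃, h₄, h₅⟩ => ⟨φ, ⟨h₁, h₂, h₃, h₄⟩, h₅⟩,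
    fun ⟨φ, ⟨h₁, h₂, h₃, h₄⟩, h₅⟩ => ⟨φ, h₁, h₂, h₃, h₄, h₅⟩⟩

namespace IsIsoOn

variable {φ ψ : V → V}

lemma mapsTo (hφ : IsIsoOn φ X Y) {v : V} (hv : v ∈ X.verts) : φ v ∈ Y.verts :=
  hφ.2.1 ▸ Finset.mem_image_of_mem φ hv

lemma exists_preimage (hφ : IsIsoOn φ X Y) {w : V} (hw : w ∈ Y.verts) :
    ∃ v ∈ X.verts, φ v = w := by
  rw [← hφ.2.1] at hw
  simpa using hw

lemma comp (hφ : IsIsoOn φ X Y) (hψ : IsIsoOn ψ Y D) : IsIsoOn (ψ ∘ φ) X D := by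
  refine ⟨hψ.1.comp hφ.1 fun v hv => hφ.mapsTo hv, ?_, ?_, ?_⟩
  · rw [← Finset.image_image, hφ.2.1, hψ.2.1]
  · intro e he
    have heY : e.image φ ⊆ Y.verts := hφ.2.1 ▸ Finset.image_subset_image he
    rw [hφ.2.2.1 e he, hψ.2.2.1 _ heY, Finset.image_image]
  · intro v hv
    rw [hφ.2.2.2 v hv, hψ.2.2.2 _ (hφ.mapsTo hv)]
    rfl

lemma plus (hφ : IsIsoOn φ X Y) (hx : x ∈ X.verts) : IsIsoOn φ (X.plus x) (Y.plus (φ x)) := by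
  refine ⟨hφ.1, hφ.2.1, hφ.2.2.1, fun v hv => ?_⟩
  simp only [plus_marked, Finset.mem_insert, hφ.2.2.2 v hv, hφ.1.eq_iff hv hx]

end IsIsoOn

lemma PointedIso.trans (h₁ : PointedIso X x Y y) (h₂ : PointedIso Y y D z) :
    PointedIso X x D z := by
  obtain ⟨φ, hφ, rfl⟩ := pointedIso_iff.1 h₁
  obtain ⟨ψ, hψ, rfl⟩ := pointedIso_iff.1 h₂
  exact pointedIso_iff.2 ⟨ψ ∘ φ, hφ.comp hψ, rfl⟩

/-- The preimage in `X` of a subhypergraph `Y` of the image of `X` under `φ`. -/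
def comap (φ : V → V) (X Y : MarkedHypergraph V) : MarkedHypergraph V :=
  ⟨X.verts.filter (φ · ∈ Y.verts), X.edges.filter (·.image φ ∈ Y.edges),
    X.verts.filter (φ · ∈ Y.marked)⟩

section comap

variable {φ : V → V}

lemma mem_comap_verts {v : V} : v ∈ (comap φ X Y).verts ↔ v ∈ X.verts ∧ φ v ∈ Y.verts :=
  Finset.mem_filter

lemma comap_plus (hφ : Set.InjOn φ X.verts) (hx : x ∈ X.verts) :
    comap φ X (Y.plus (φ x)) = (comap φ X Y).plus x := by
  unfold comap
  congr 1
  ext v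
  simp only [Finset.mem_filter, plus_marked, Finset.mem_insert]
  constructor
  · rintro ⟨hv, hxv | hm⟩
    exacts [Or.inl (hφ hv hx hxv), Or.inr ⟨hv, hm⟩]
  · rintro (rfl | ⟨hv, hm⟩)
    exacts [⟨hx, Or.inl rfl⟩, ⟨hv, Or.inr hm⟩]

lemma comap_isSub (hφ : IsIsoOn φ X D) (hY : Y.IsSub D) : (comap φ X Y).IsSub X := by
  refine ⟨Finset.filter_subset _ _, Finset.filter_subset _ _, ?_⟩
  ext v
  simp only [comap, Finset.mem_filter, Finset.mem_inter, hY.2.2]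
  constructor
  · rintro ⟨hv, hφv, hφm⟩
    exact ⟨⟨hv, hφv⟩, (hφ.2.2.2 v hv).2 hφm⟩
  · rintro ⟨⟨hv, hφv⟩, hm⟩
    exact ⟨hv, hφv, (hφ.2.2.2 v hv).1 hm⟩

lemma comap_isValid (hX : X.IsValid) (hφ : IsIsoOn φ X D) (hY : Y.IsValid)
    (hYD : Y.verts ⊆ D.verts) : (comap φ X Y).IsValid := by
  refine ⟨?_, fun e he => ?_, fun v hv => ?_⟩
  · obtain ⟨w, hw⟩ := hY.1
    obtain ⟨v, hv, rfl⟩ := hφ.exists_preimage (hYD hw)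
    exact ⟨v, mem_comap_verts.2 ⟨hv, hw⟩⟩
  · obtain ⟨heX, heY⟩ := Finset.mem_filter.1 he
    obtain ⟨hsub, hne⟩ := hY.2.1 _ heY
    exact ⟨fun v hv => mem_comap_verts.2 ⟨(hX.2.1 e heX).1 hv,
      hsub (Finset.mem_image_of_mem φ hv)⟩, Finset.image_nonempty.1 hne⟩
  · obtain ⟨hvX, hvY⟩ := Finset.mem_filter.1 hv
    exact mem_comap_verts.2 ⟨hvX, hY.2.2 hvY⟩

lemma comap_pointedIso (hφ : IsIsoOn φ X D) (hY : Y.IsSub D) (v : V) :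
    PointedIso (comap φ X Y) v Y (φ v) := by
  refine pointedIso_iff.2 ⟨φ, ⟨hφ.1.mono (Finset.filter_subset _ _), ?_, ?_, ?_⟩, rfl⟩
  · ext w
    simp only [comap, Finset.mem_image, Finset.mem_filter]
    constructor
    · rintro ⟨u, ⟨-, hu⟩, rfl⟩
      exact hu
    · intro hw
      obtain ⟨u, hu, rfl⟩ := hφ.exists_preimage (hY.1 hw)
      exact ⟨u, ⟨hu, hw⟩, rfl⟩
  · intro e he
    have heX : e ⊆ X.verts := he.trans (Finset.filter_subset _ _)
    simp only [comap, Finset.mem_filter, and_iff_right_iff_imp]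
    exact fun heY => (hφ.2.2.1 e heX).2 (hY.2.1 heY)
  · intro w hw
    simp only [comap, Finset.mem_filter, and_iff_right_iff_imp]
    exact fun _ => (Finset.mem_filter.1 hw).1

lemma comap_mem_xFam (hX : X.IsValid) (hφ : IsIsoOn φ X D) (hY : Y ∈ xFam G D (φ z))
    (hz : z ∈ X.verts) : comap φ X Y ∈ xFam G X z := by
  obtain ⟨hval, hsub, hzY, p, hp, hiso⟩ := hY
  have hzc : z ∈ (comap φ X Y).verts := mem_comap_verts.2 ⟨hz, hzY⟩
  exact ⟨comap_isValid hX hφ hval hsub.1, comap_isSub hφ hsub, hzc, p, hp,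
    (comap_pointedIso hφ hsub z).trans hiso⟩

lemma IsIsoOn.map_mem_inter (hφ : IsIsoOn φ X D) {O : Set (MarkedHypergraph V)} {v : V}
    (hv : v ∈ inter X (comap φ X '' O)) : φ v ∈ inter D O := by
  obtain ⟨hvX, hvm, hvO⟩ := hv
  exact ⟨hφ.mapsTo hvX, fun h => hvm ((hφ.2.2.2 v hvX).2 h),
    fun Y hY => (mem_comap_verts.1 (hvO _ ⟨Y, hY, rfl⟩)).2⟩

end comap

lemma obs_of_pointedIso (hD : (D, y) ∈ obs G) (hX : X.IsValid) (hx : x ∈ X.verts)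
    (hiso : PointedIso X x D y) : (X, x) ∈ obs G := by
  obtain ⟨φ, hφ, rfl⟩ := pointedIso_iff.1 hiso
  obtain ⟨-, hxm, z', hz', hz'm, hz'x, O, hO, hOx, hOnx, hV, hE, hM, hI⟩ := hD
  obtain ⟨z, hz, rfl⟩ := hφ.exists_preimage hz'
  refine ⟨hx, fun h => hxm ((hφ.2.2.2 x hx).1 h), z, hz, fun h => hz'm ((hφ.2.2.2 z hz).1 h),
    fun h => hz'x (congrArg φ h), comap φ X '' O, ?_, ?_, ?_, ?_, ?_, ?_, ?_⟩
  · rintro _ ⟨Y, hY, rfl⟩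
    exact ⟨comap_isValid hX hφ (hO Y hY).1 (hO Y hY).2.1, comap_isSub hφ (hO Y hY).2⟩
  · rintro _ ⟨Y, hY, rfl⟩ hxY
    rw [← comap_plus hφ.1 hx]
    exact comap_mem_xFam (hX.plus hx) (hφ.plus hx) (hOx Y hY (mem_comap_verts.1 hxY).2) hz
  · rintro _ ⟨Y, hY, rfl⟩ hxY
    exact comap_mem_xFam hX hφ (hOnx Y hY fun h => hxY (mem_comap_verts.2 ⟨hx, h⟩)) hz
  · intro v hv
    obtain ⟨Y, hY, hvY⟩ := hV _ (hφ.mapsTo hv)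
    exact ⟨_, ⟨Y, hY, rfl⟩, mem_comap_verts.2 ⟨hv, hvY⟩⟩
  · intro e he
    obtain ⟨Y, hY, heY⟩ := hE _ ((hφ.2.2.1 e (hX.2.1 e he).1).1 he)
    exact ⟨_, ⟨Y, hY, rfl⟩, Finset.mem_filter.2 ⟨he, heY⟩⟩
  · intro m hm
    obtain ⟨Y, hY, hmY⟩ := hM _ ((hφ.2.2.2 m (hX.2.2 hm)).1 hm)
    exact ⟨_, ⟨Y, hY, rfl⟩, Finset.mem_filter.2 ⟨hX.2.2 hm, hmY⟩⟩
  · refine Set.eq_empty_of_forall_notMem fun v hv => ?_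
    exact Set.eq_empty_iff_forall_notMem.1 hI _ (((hφ.plus hx).plus hz).map_mem_inter hv)

lemma isValid_of_mem_obs (hD : (D, x) ∈ obs G) : D.IsValid := by
  obtain ⟨hx, -, -, -, -, -, O, hO, -, -, -, hE, hM, -⟩ := hD
  refine ⟨⟨x, hx⟩, fun e he => ?_, fun m hm => ?_⟩
  · obtain ⟨X, hX, heX⟩ := hE e he
    obtain ⟨hsub, hne⟩ := (hO X hX).1.2.1 e heX
    exact ⟨hsub.trans (hO X hX).2.1, hne⟩
  · obtain ⟨X, hX, hmX⟩ := hM m hm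
    exact (hO X hX).2.1 ((hO X hX).1.2.2 hmX)

lemma mem_xFam_obs_iff : X ∈ xFam (obs G) H x ↔ X.IsSub H ∧ (X, x) ∈ obs G :=
  ⟨fun ⟨hval, hsub, hx, _, hp, hiso⟩ => ⟨hsub, obs_of_pointedIso hp hval hx hiso⟩,
    fun ⟨hsub, hX⟩ => ⟨isValid_of_mem_obs hX, hsub, hX.1, _, hX, PointedIso.refl X x⟩⟩

lemma mem_inter_xFam_obs (hy : y ∈ (H.plus x).verts \ (H.plus x).marked)
    (hJ : J G 1 ((H.plus x).minus y)) : y ∈ inter (H.plus x) (xFam (obs G) H x) := by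
  refine ⟨(Finset.mem_sdiff.1 hy).1, (Finset.mem_sdiff.1 hy).2, fun X hX => ?_⟩
  obtain ⟨-, -, z, hzX, hzm, hzx, O, hO, hOx, hOnx, hV, -, -, hI⟩ := (mem_xFam_obs_iff.1 hX).2
  obtain ⟨hXval, hXsub, hxX, -⟩ := hX
  by_contra hyX
  have hXm : X.marked ⊆ H.marked := hXsub.2.2 ▸ Finset.inter_subset_right
  have hXK : (X.plus x).IsSub ((H.plus x).minus y) :=
    (hXsub.plus hxX).minus (fun e he => (hXval.2.1 e he).1) hyX
  have hzK : z ∈ ((H.plus x).minus y).verts \ ((H.plus x).minus y).marked := by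
    rw [plus_minus_free, Finset.mem_erase, Finset.mem_erase, Finset.mem_sdiff]
    exact ⟨fun h => hyX (h ▸ hzX), hzx, hXsub.1 hzX,
      fun h => hzm (hXsub.2.2 ▸ Finset.mem_inter.2 ⟨hzX, h⟩)⟩
  -- a safe answer `w` to `z` in `H^{+x-y}` lies in every member of `O`, although `I(O) = ∅`
  obtain ⟨w, hwK, hwm, hw⟩ := J_one_iff.1 hJ z hzK
  have hwO : ∀ Y ∈ O, w ∈ Y.verts := by
    intro Y hY
    by_cases hxY : x ∈ Y.verts
    · exact hw (Y.plus x) (mem_xFam_of_isSub (hOx Y hY hxY) hXK)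
    · obtain ⟨hval, hsub, hzY⟩ := hOnx Y hY hxY
      exact hw _ ⟨hval, ((isSub_plus_iff_of_notMem hxY).2 hsub).trans hXK, hzY⟩
  obtain ⟨Y₀, hY₀, -⟩ := hV x hxX
  have hwm' : w ∉ insert z (insert x X.marked) := by
    have hwy : w ≠ y := (Finset.mem_erase.1 hwK).1
    simp only [plus_marked, minus_marked, Finset.mem_erase, Finset.mem_insert, hwy, ne_eq,
      not_false_eq_true, true_and, not_or] at hwm ⊢
    exact ⟨hwm.1, hwm.2.1, fun h => hwm.2.2 (hXm h)⟩
  exact Set.eq_empty_iff_forall_notMem.1 hI w ⟨(hO Y₀ hY₀).2.1 (hwO Y₀ hY₀), hwm', hwO⟩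

namespace MarkedHypergraph

def inheritMarks (X H : MarkedHypergraph V) : MarkedHypergraph V :=
  ⟨X.verts, X.edges, X.verts ∩ H.marked⟩

lemma IsValid.inheritMarks (hX : X.IsValid) : (X.inheritMarks H).IsValid :=
  ⟨hX.1, hX.2.1, Finset.inter_subset_left⟩

lemma IsSub.inheritMarks_eq (h : X.IsSub H) : X.inheritMarks H = X := by
  rw [inheritMarks, ← h.2.2]

lemma IsSub.inheritMarks_isSub (h : X.IsSub (H.plus x)) : (X.inheritMarks H).IsSub H :=
  ⟨h.1, h.2.1, rfl⟩

lemma IsSub.inheritMarks_plus (h : X.IsSub (H.plus x)) (hx : x ∈ X.verts) :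
    (X.inheritMarks H).plus x = X := by
  rw [← h.inheritMarks_eq]
  simp only [inheritMarks, MarkedHypergraph.plus, Finset.inter_insert_of_mem hx]

end MarkedHypergraph

open Classical in
/-- The union of the members of `𝒳`, cut down to `H` and carrying the marking of `H`. -/
noncomputable def unionIn (H : MarkedHypergraph V) (𝒳 : Set (MarkedHypergraph V)) :
    MarkedHypergraph V :=
  ⟨H.verts.filter (fun v => ∃ X ∈ 𝒳, v ∈ X.verts),
    H.edges.filter (fun e => ∃ X ∈ 𝒳, e ∈ X.edges),
    H.verts.filter (fun v => ∃ X ∈ 𝒳, v ∈ X.verts) ∩ H.marked⟩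

section unionIn

variable {𝒳 : Set (MarkedHypergraph V)}

lemma mem_unionIn_verts {v : V} :
    v ∈ (unionIn H 𝒳).verts ↔ v ∈ H.verts ∧ ∃ X ∈ 𝒳, v ∈ X.verts := by
  simp only [unionIn, Finset.mem_filter]

lemma mem_unionIn_edges {e : Finset V} :
    e ∈ (unionIn H 𝒳).edges ↔ e ∈ H.edges ∧ ∃ X ∈ 𝒳, e ∈ X.edges := by
  simp only [unionIn, Finset.mem_filter]

lemma unionIn_isSub : (unionIn H 𝒳).IsSub H :=
  ⟨fun _ hv => (mem_unionIn_verts.1 hv).1, fun _ he => (mem_unionIn_edges.1 he).1, rfl⟩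

lemma MarkedHypergraph.IsSub.isSub_unionIn (hX : X.IsSub H) (hX𝒳 : X ∈ 𝒳) :
    X.IsSub (unionIn H 𝒳) :=
  hX.of_subset unionIn_isSub (fun _ hv => mem_unionIn_verts.2 ⟨hX.1 hv, X, hX𝒳, hv⟩)
    (fun _ he => mem_unionIn_edges.2 ⟨hX.2.1 he, X, hX𝒳, he⟩)

end unionIn

/-- Once the mark at `x` is forgotten, dangers at `z` in `H^{+x}` without a common free vertex
are the pieces of an obstruction at `x`. -/
lemma unionIn_inheritMarks_mem_obs {𝒳 : Set (MarkedHypergraph V)}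
    (h𝒳 : ∀ A ∈ 𝒳, A ∈ xFam G (H.plus x) z) (hA₀ : A₀ ∈ 𝒳) (hxA₀ : x ∈ A₀.verts)
    (hxH : x ∉ H.marked) (hzH : z ∉ H.marked) (hzx : z ≠ x)
    (hI : inter ((H.plus x).plus z) 𝒳 = ∅) :
    (unionIn H ((inheritMarks · H) '' 𝒳), x) ∈ obs G := by
  have hD : ∀ A ∈ 𝒳, (A.inheritMarks H).IsSub (unionIn H ((inheritMarks · H) '' 𝒳)) :=
    fun A hA => (h𝒳 A hA).2.1.inheritMarks_isSub.isSub_unionIn ⟨A, hA, rfl⟩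
  refine ⟨(hD A₀ hA₀).1 hxA₀, fun h => hxH (Finset.mem_inter.1 h).2, z,
    (hD A₀ hA₀).1 (h𝒳 A₀ hA₀).2.2.1, fun h => hzH (Finset.mem_inter.1 h).2, hzx,
    (inheritMarks · H) '' 𝒳, ?_, ?_, ?_, ?_, ?_, ?_, ?_⟩
  · rintro _ ⟨A, hA, rfl⟩
    exact ⟨(h𝒳 A hA).1.inheritMarks, hD A hA⟩
  · rintro _ ⟨A, hA, rfl⟩ hxA
    obtain ⟨hval, hsub, hz, hiso⟩ := h𝒳 A hA
    rw [hsub.inheritMarks_plus hxA]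
    exact ⟨hval, hsub.of_subset (unionIn_isSub.plus ((hD A hA).1 hxA)) (hD A hA).1
      (hD A hA).2.1, hz, hiso⟩
  · rintro _ ⟨A, hA, rfl⟩ hxA
    obtain ⟨hval, hsub, hz, hiso⟩ := h𝒳 A hA
    have hA_eq := ((isSub_plus_iff_of_notMem (X := A) hxA).1 hsub).inheritMarks_eq
    exact ⟨hval.inheritMarks, hD A hA, hz, hA_eq ▸ hiso⟩
  · exact fun v hv => (mem_unionIn_verts.1 hv).2
  · exact fun e he => (mem_unionIn_edges.1 he).2
  · intro m hm
    obtain ⟨hmD, hmH⟩ := Finset.mem_inter.1 hm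
    obtain ⟨-, _, ⟨A, hA, rfl⟩, hmA⟩ := mem_unionIn_verts.1 hmD
    exact ⟨A.inheritMarks H, ⟨A, hA, rfl⟩, Finset.mem_inter.2 ⟨hmA, hmH⟩⟩
  · refine Set.eq_empty_of_forall_notMem fun v ⟨hvD, hvm, hv𝒪⟩ => ?_
    refine Set.eq_empty_iff_forall_notMem.1 hI v
      ⟨(mem_unionIn_verts.1 hvD).1, ?_, fun A hA => hv𝒪 (A.inheritMarks H) ⟨A, hA, rfl⟩⟩
    simp only [plus_marked, Finset.mem_insert, not_or] at hvm ⊢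
    exact ⟨hvm.1, hvm.2.1, fun h => hvm.2.2 (Finset.mem_inter.2 ⟨hvD, h⟩)⟩

lemma inter_nonempty_of_forall_notMem (hG : G ⊆ G') (hJ : J G' 1 H)
    (hz : z ∈ ((H.plus x).minus y).verts \ ((H.plus x).minus y).marked)
    (hfree : ((((H.plus x).minus y).plus z).verts \
      (((H.plus x).minus y).plus z).marked).Nonempty)
    (hxA : ∀ A ∈ xFam G ((H.plus x).minus y) z, x ∉ A.verts) :
    (inter (((H.plus x).minus y).plus z) (xFam G ((H.plus x).minus y) z)).Nonempty := by
  rw [Set.nonempty_iff_ne_empty]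
  intro hI
  obtain ⟨w₀, hw₀⟩ := hfree
  obtain ⟨A₁, hA₁, -⟩ : ∃ A ∈ xFam G ((H.plus x).minus y) z, w₀ ∉ A.verts := by
    by_contra! h
    exact Set.eq_empty_iff_forall_notMem.1 hI w₀
      ⟨(Finset.mem_sdiff.1 hw₀).1, (Finset.mem_sdiff.1 hw₀).2, h⟩
  rw [plus_minus_free] at hz
  -- a safe answer to `z` in `H` is also one in `H^{+x-y}`
  obtain ⟨w, hwH, hwm, hw⟩ :=
    J_one_iff.1 hJ z (Finset.mem_of_mem_erase (Finset.mem_of_mem_erase hz))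
  have hwA : ∀ A ∈ xFam G ((H.plus x).minus y) z, w ∈ A.verts := fun A hA =>
    hw A (xFam_mono hG ⟨hA.1, (isSub_plus_iff_of_notMem (hxA A hA)).1 hA.2.1.of_minus, hA.2.2⟩)
  have hwx : w ≠ x := fun h => hxA A₁ hA₁ (h ▸ hwA A₁ hA₁)
  have hwy : w ≠ y := fun h => hA₁.2.1.notMem_of_minus (h ▸ hwA A₁ hA₁)
  refine Set.eq_empty_iff_forall_notMem.1 hI w ⟨Finset.mem_erase.2 ⟨hwy, hwH⟩, ?_, hwA⟩
  simp only [plus_marked, minus_marked, Finset.mem_insert, Finset.mem_erase, not_or] at hwm ⊢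
  tauto

lemma J_one_plus_minus (hG : G ⊆ G') (hJ : J G' 1 H) (hcard : 4 ≤ (H.verts \ H.marked).card)
    (hx : x ∈ H.verts \ H.marked) (hy : y ∈ inter (H.plus x) (xFam (obs G) H x)) :
    J G 1 ((H.plus x).minus y) := by
  have hyfree : y ∈ (H.plus x).verts \ (H.plus x).marked := Finset.mem_sdiff.2 ⟨hy.1, hy.2.1⟩
  refine J_one_iff.2 fun z hz => ?_
  by_cases hxA : ∃ A ∈ xFam G ((H.plus x).minus y) z, x ∈ A.verts
  · obtain ⟨A₀, hA₀, hxA₀⟩ := hxA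
    rw [Set.nonempty_iff_ne_empty]
    intro hI
    obtain ⟨-, hzx, -, hzH⟩ : z ≠ y ∧ z ≠ x ∧ z ∈ H.verts ∧ z ∉ H.marked := by
      simpa only [plus_minus_free, Finset.mem_erase, Finset.mem_sdiff] using hz
    have hI' : inter ((H.plus x).plus z) (xFam G ((H.plus x).minus y) z) = ∅ := by
      refine Set.eq_empty_of_forall_notMem fun v ⟨hvH, hvm, hvA⟩ => ?_
      have hvy : v ≠ y := fun h => hA₀.2.1.notMem_of_minus (h ▸ hvA A₀ hA₀)
      refine Set.eq_empty_iff_forall_notMem.1 hI v ⟨Finset.mem_erase.2 ⟨hvy, hvH⟩, ?_, hvA⟩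
      simp only [plus_marked, minus_marked, Finset.mem_insert, Finset.mem_erase, not_or] at hvm ⊢
      tauto
    have hobs := unionIn_inheritMarks_mem_obs (fun A hA => ⟨hA.1, hA.2.1.of_minus, hA.2.2⟩)
      hA₀ hxA₀ (Finset.mem_sdiff.1 hx).2 hzH hzx hI'
    obtain ⟨-, _, ⟨A, hA, rfl⟩, hyA⟩ :=
      mem_unionIn_verts.1 (hy.2.2 _ (mem_xFam_obs_iff.2 ⟨unionIn_isSub, hobs⟩))
    exact hA.2.1.notMem_of_minus hyA
  · push Not at hxA
    refine inter_nonempty_of_forall_notMem hG hJ hz ?_ hxA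
    rw [plus_free, ← Finset.card_pos, Finset.card_erase_of_mem hz]
    have := card_plus_minus_free hx hyfree
    omega

theorem J_succ_iff_J_one_star (F : Set (MarkedHypergraph V × V)) :
    ∀ (r : ℕ) (H : MarkedHypergraph V), 2 * (r + 1) ≤ (H.verts \ H.marked).card →
      (J F (r + 1) H ↔ J (star F r) 1 H)
  | 0, _, _ => Iff.rfl
  | r + 1, H, hcard => by
    have IH : ∀ x ∈ H.verts \ H.marked, ∀ y ∈ (H.plus x).verts \ (H.plus x).marked,
        (J F (r + 1) ((H.plus x).minus y) ↔ J (star F r) 1 ((H.plus x).minus y)) :=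
      fun x hx y hy =>
        J_succ_iff_J_one_star F r _ (by have := card_plus_minus_free hx hy; omega)
    have hinter : ∀ x, inter (H.plus x) (xFam (star F (r + 1)) H x) =
        inter (H.plus x) (xFam F H x) ∩ inter (H.plus x) (xFam (obs (star F r)) H x) :=
      fun x => by rw [star, xFam_union, inter_union]
    constructor
    · intro hJ
      refine J_one_iff.2 fun x hx => ?_
      obtain ⟨y, hyF, hJy⟩ := hJ x hx
      have hy : y ∈ (H.plus x).verts \ (H.plus x).marked := Finset.mem_sdiff.2 ⟨hyF.1, hyF.2.1⟩
      exact ⟨y, hinter x ▸ ⟨hyF, mem_inter_xFam_obs hy ((IH x hx y hy).1 hJy)⟩⟩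
    · intro hJ x hx
      obtain ⟨y, hy⟩ := J_one_iff.1 hJ x hx
      rw [hinter] at hy
      exact ⟨y, hy.1, (IH x hx y (Finset.mem_sdiff.2 ⟨hy.1.1, hy.1.2.1⟩)).2
        (J_one_plus_minus (star_subset_star_succ F r) hJ (by omega) hx hy.2)⟩

end MB

theorem statement12_general {V : Type} [DecidableEq V]
    (F : Set (MB.MarkedHypergraph V × V))
    (r : ℕ) (hr : 1 ≤ r) :
    ∀ H : MB.MarkedHypergraph V, H.IsValid → 2 * r ≤ (H.verts \ H.marked).card →
      (MB.J F r H ↔ MB.J (MB.star F (r - 1)) 1 H) := by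
  obtain ⟨s, rfl⟩ := Nat.exists_eq_add_of_le' hr
  exact fun H _ hcard => MB.J_succ_iff_J_one_star F s H hcard

/-- Proposition 1.35: `J_r(ℱ,H) ↔ J_1(ℱ^{*(r-1)},H)`. -/
theorem statement12 {V : Type} [DecidableEq V]
    (F : Set (MB.MarkedHypergraph V × V)) (hF : MB.IsDangerFamily F)
    (r : ℕ) (hr : 1 ≤ r) :
    ∀ H : MB.MarkedHypergraph V, H.IsValid → 2 * r ≤ (H.verts \ H.marked).card →
      (MB.J F r H ↔ MB.J (MB.star F (r - 1)) 1 H) :=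
  statement12_general F r hr
end

section
/- Every marked hypergraph that contains a nunchaku as a subhypergraph is a Maker win. -/
/-!
Maker walks along the nunchaku. Its first edge is `{a, c, m}` with `a` marked and `c` the vertex
shared with the second edge. Maker claims `c`; the first edge is now one vertex short of
completion, so Breaker must take `m`, and the remaining edges form a shorter nunchaku starting at
`c`. A nunchaku with a single edge leaves one free vertex in that edge, and Maker claims it.
-/

namespace MB.MarkedHypergraph

variable {V : Type} [DecidableEq V] {H : MarkedHypergraph V} {e : Finset V} {x y c m : V}

theorem mem_free_plus :
    y ∈ (H.plus x).verts \ (H.plus x).marked ↔ y ∈ H.verts \ H.marked ∧ y ≠ x := by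
  simp only [plus, Finset.mem_sdiff, Finset.mem_insert]
  tauto

theorem mem_edges_plus_minus (he : e ∈ H.edges) (hy : y ∉ e) :
    e ∈ ((H.plus x).minus y).edges :=
  Finset.mem_filter.mpr ⟨he, hy⟩

theorem subset_verts_plus_minus (he : e ⊆ H.verts) (hy : y ∉ e) :
    e ⊆ ((H.plus x).minus y).verts :=
  fun _ hv => Finset.mem_erase.mpr ⟨fun h => hy (h ▸ hv), he hv⟩

theorem sdiff_marked_plus_minus_subset (hy : y ∉ e) :
    e \ ((H.plus x).minus y).marked ⊆ (e \ H.marked).erase x := by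
  intro v hv
  simp only [plus, minus, Finset.mem_sdiff, Finset.mem_erase, Finset.mem_insert] at hv ⊢
  have hvy : v ≠ y := fun h => hy (h ▸ hv.1)
  tauto

theorem makerWin_of_move (hfree : 2 ≤ (H.verts \ H.marked).card) (hx : x ∈ H.verts \ H.marked)
    (hwin : ∀ y ∈ (H.plus x).verts \ (H.plus x).marked, ((H.plus x).minus y).MakerWin) :
    H.MakerWin := by
  rw [MakerWin, if_neg (by omega)]
  exact ⟨x, hx, hwin⟩

/-- Maker claims the last free vertex of `e`, or anything if `e` has none; the edge survives
every answer of Breaker. -/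
theorem makerWin_of_card_sdiff_marked_le_one {H : MarkedHypergraph V} {e : Finset V}
    (he : e ∈ H.edges) (hsub : e ⊆ H.verts) (hcard : (e \ H.marked).card ≤ 1) :
    H.MakerWin := by
  by_cases hsmall : (H.verts \ H.marked).card ≤ 1
  · rw [MakerWin, if_pos hsmall]
    exact ⟨e, he, hcard⟩
  obtain ⟨x, hx, hex⟩ : ∃ x ∈ H.verts \ H.marked, e \ H.marked ⊆ {x} := by
    rcases (e \ H.marked).eq_empty_or_nonempty with hempty | ⟨z, hz⟩
    · obtain ⟨x, hx⟩ := Finset.card_pos.mp (show 0 < (H.verts \ H.marked).card by omega)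
      exact ⟨x, hx, hempty ▸ Finset.empty_subset _⟩
    · refine ⟨z, Finset.sdiff_subset_sdiff hsub le_rfl hz, fun v hv => ?_⟩
      exact Finset.mem_singleton.mpr (Finset.card_le_one.mp hcard v hv z hz)
  refine makerWin_of_move (by omega) hx fun y hy => ?_
  obtain ⟨hyfree, hyx⟩ := mem_free_plus.mp hy
  have hye : y ∉ e := fun hye => hyx <| Finset.mem_singleton.mp <|
    hex (Finset.mem_sdiff.mpr ⟨hye, (Finset.mem_sdiff.mp hyfree).2⟩)
  refine makerWin_of_card_sdiff_marked_le_one (mem_edges_plus_minus he hye)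
    (subset_verts_plus_minus hsub hye) ?_
  calc _ ≤ ((e \ H.marked).erase x).card :=
        Finset.card_le_card (sdiff_marked_plus_minus_subset hye)
    _ ≤ ({x} : Finset V).card := Finset.card_le_card ((Finset.erase_subset _ _).trans hex)
    _ = 1 := Finset.card_singleton x
termination_by (H.verts \ H.marked).card
decreasing_by exact card_free_lt H x y hy

/-- Claiming `c` threatens to complete `e` at `m`, so Breaker must answer at `m`. -/
theorem makerWin_of_forcing (he : e ∈ H.edges) (hsub : e ⊆ H.verts) (hcm : c ≠ m)
    (hfree : e \ H.marked = {c, m}) (hwin : ((H.plus c).minus m).MakerWin) : H.MakerWin := by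
  have hpair : ({c, m} : Finset V) ⊆ H.verts \ H.marked :=
    hfree ▸ Finset.sdiff_subset_sdiff hsub le_rfl
  refine makerWin_of_move ((Finset.card_pair hcm).symm.le.trans (Finset.card_le_card hpair))
    (hpair (Finset.mem_insert_self c _)) fun y hy => ?_
  obtain ⟨hyfree, hyc⟩ := mem_free_plus.mp hy
  rcases eq_or_ne y m with rfl | hym
  · exact hwin
  have hye : y ∉ e := by
    intro hye
    have : y ∈ ({c, m} : Finset V) :=
      hfree ▸ Finset.mem_sdiff.mpr ⟨hye, (Finset.mem_sdiff.mp hyfree).2⟩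
    simp_all
  refine makerWin_of_card_sdiff_marked_le_one (mem_edges_plus_minus he hye)
    (subset_verts_plus_minus hsub hye) ?_
  calc _ ≤ ((e \ H.marked).erase c).card :=
        Finset.card_le_card (sdiff_marked_plus_minus_subset hye)
    _ = 1 := by rw [hfree, Finset.erase_insert (by simpa using hcm), Finset.card_singleton]

end MB.MarkedHypergraph

namespace MB

open MarkedHypergraph

variable {V : Type} [DecidableEq V]

/-- A nunchaku inside `H`, given by its edge sequence `e 0, …, e (L - 1)` so that its tail is
again one without building a subhypergraph; the edges need not be distinct. -/
structure IsNunchakuIn (H : MarkedHypergraph V) (e : ℕ → Finset V) (a b : V) (L : ℕ) :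
    Prop where
  ne : a ≠ b
  mem_edges : ∀ i < L, e i ∈ H.edges
  subset_verts : ∀ i < L, e i ⊆ H.verts
  card_eq : ∀ i < L, (e i).card = 3
  left_mem : a ∈ e 0
  right_mem : b ∈ e (L - 1)
  card_inter_succ : ∀ i, i + 1 < L → (e i ∩ e (i + 1)).card = 1
  inter_eq_empty : ∀ i j, i + 2 ≤ j → j < L → e i ∩ e j = ∅
  left_notMem : ∀ i, 1 ≤ i → i < L → a ∉ e i
  right_notMem : ∀ i, i + 1 < L → b ∉ e i
  left_marked : a ∈ H.marked
  right_marked : b ∈ H.marked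
  inter_marked_subset : ∀ i < L, e i ∩ H.marked ⊆ {a, b}

theorem isNunchakuIn_of_isSub {H N : MarkedHypergraph V} {a b : V} {L : ℕ} (hsub : N.IsSub H)
    (hL : 1 ≤ L) (hpath : IsPathLen N a b L) (hmarked : N.marked = {a, b}) :
    ∃ e, IsNunchakuIn H e a b L := by
  obtain ⟨hV, hE, hM⟩ := hsub
  rcases hpath with ⟨rfl, -⟩ |
    ⟨-, hab, e, hedges, hverts, hcard, -, ha, hb, hsucc, hfar, hna, hnb⟩
  · omega
  have he_verts : ∀ i < L, e i ⊆ N.verts := fun i hi =>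
    hverts ▸ Finset.subset_biUnion_of_mem e (Finset.mem_range.mpr hi)
  have hends : N.verts ∩ H.marked = {a, b} := hM ▸ hmarked
  have hends_marked : {a, b} ⊆ H.marked := hends ▸ Finset.inter_subset_right
  refine ⟨e, hab, fun i hi => hE (hedges ▸ Finset.mem_image_of_mem e (Finset.mem_range.mpr hi)),
    fun i hi => (he_verts i hi).trans hV, hcard, ha, hb, hsucc, hfar, hna, hnb,
    hends_marked (by simp), hends_marked (by simp), fun i hi => ?_⟩
  exact hends ▸ Finset.inter_subset_inter_right (he_verts i hi)

namespace IsNunchakuIn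

variable {H : MarkedHypergraph V} {e : ℕ → Finset V} {a b : V} {L : ℕ}

theorem card_sdiff_marked_le_one (h : IsNunchakuIn H e a b 1) : (e 0 \ H.marked).card ≤ 1 := by
  have hab : {a, b} ⊆ e 0 := Finset.insert_subset h.left_mem (by simpa using h.right_mem)
  calc (e 0 \ H.marked).card ≤ (e 0 \ {a, b}).card :=
        Finset.card_le_card (Finset.sdiff_subset_sdiff le_rfl
          (Finset.insert_subset h.left_marked (by simpa using h.right_marked)))
    _ = 1 := by rw [Finset.card_sdiff_of_subset hab, h.card_eq 0 one_pos, Finset.card_pair h.ne]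

theorem exists_free_eq_pair (h : IsNunchakuIn H e a b (L + 2)) :
    ∃ c m, c ≠ m ∧ e 0 ∩ e 1 = {c} ∧ m ∈ e 0 ∧ e 0 \ H.marked = {c, m} := by
  obtain ⟨c, hc⟩ := Finset.card_eq_one.mp (h.card_inter_succ 0 (by omega))
  have hc0 : c ∈ e 0 := (Finset.mem_inter.mp (hc ▸ Finset.mem_singleton_self c)).1
  have hc1 : c ∈ e 1 := (Finset.mem_inter.mp (hc ▸ Finset.mem_singleton_self c)).2
  have hb0 : b ∉ e 0 := h.right_notMem 0 (by omega)
  have hmarked0 : e 0 ∩ H.marked = {a} := by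
    refine Finset.Subset.antisymm (fun v hv => ?_) (by simpa using ⟨h.left_mem, h.left_marked⟩)
    have := h.inter_marked_subset 0 (by omega) hv
    simp only [Finset.mem_insert, Finset.mem_singleton] at this ⊢
    exact this.resolve_right fun hvb => hb0 (hvb ▸ (Finset.mem_inter.mp hv).1)
  have hcfree : c ∈ e 0 \ H.marked := by
    refine Finset.mem_sdiff.mpr ⟨hc0, fun hcm => ?_⟩
    have hca : c ∈ ({a} : Finset V) := hmarked0 ▸ Finset.mem_inter.mpr ⟨hc0, hcm⟩
    exact h.left_notMem 1 le_rfl (by omega) (Finset.mem_singleton.mp hca ▸ hc1)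
  have hcard : ((e 0 \ H.marked).erase c).card = 1 := by
    rw [Finset.card_erase_of_mem hcfree, Finset.card_sdiff, Finset.inter_comm, hmarked0,
      h.card_eq 0 (by omega), Finset.card_singleton]
  obtain ⟨m, hm⟩ := Finset.card_eq_one.mp hcard
  have hm' : m ∈ (e 0 \ H.marked).erase c := hm ▸ Finset.mem_singleton_self m
  refine ⟨c, m, (Finset.ne_of_mem_erase hm').symm, hc,
    (Finset.mem_sdiff.mp (Finset.mem_of_mem_erase hm')).1, ?_⟩
  rw [← Finset.insert_erase hcfree, hm]

theorem tail {c m : V} (h : IsNunchakuIn H e a b (L + 2)) (hc : e 0 ∩ e 1 = {c})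
    (hm : m ∈ e 0) (hmc : m ≠ c) :
    IsNunchakuIn ((H.plus c).minus m) (fun i => e (i + 1)) c b (L + 1) := by
  have hc01 : c ∈ e 0 ∩ e 1 := hc ▸ Finset.mem_singleton_self c
  have hc0 : c ∈ e 0 := (Finset.mem_inter.mp hc01).1
  have hb0 : b ∉ e 0 := h.right_notMem 0 (by omega)
  have hfar : ∀ v ∈ e 0, ∀ i, 2 ≤ i → i < L + 2 → v ∉ e i := fun v hv i hi hiL hvi =>
    Finset.notMem_empty v (h.inter_eq_empty 0 i hi hiL ▸ Finset.mem_inter.mpr ⟨hv, hvi⟩)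
  have hm_tail : ∀ i < L + 1, m ∉ e (i + 1) := by
    rintro (_ | i) hi hmi
    · exact hmc (Finset.mem_singleton.mp (hc ▸ Finset.mem_inter.mpr ⟨hm, hmi⟩))
    · exact hfar m hm (i + 2) (by omega) (by omega) hmi
  refine ⟨fun hcb => hb0 (hcb ▸ hc0), fun i hi => ?_, fun i hi => ?_,
    fun i hi => h.card_eq (i + 1) (by omega), (Finset.mem_inter.mp hc01).2, ?_,
    fun i hi => h.card_inter_succ (i + 1) (by omega),
    fun i j hij hj => h.inter_eq_empty (i + 1) (j + 1) (by omega) (by omega),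
    fun i hi hiL => hfar c hc0 (i + 1) (by omega) (by omega),
    fun i hi => h.right_notMem (i + 1) (by omega), ?_, ?_, fun i hi v hv => ?_⟩
  · exact mem_edges_plus_minus (h.mem_edges (i + 1) (by omega)) (hm_tail i hi)
  · exact subset_verts_plus_minus (h.subset_verts (i + 1) (by omega)) (hm_tail i hi)
  · simpa using h.right_mem
  · simp [plus, minus, hmc.symm]
  · exact Finset.mem_erase.mpr
      ⟨fun hbm => hb0 (hbm ▸ hm), Finset.mem_insert_of_mem h.right_marked⟩
  · simp only [plus, minus, Finset.mem_inter, Finset.mem_erase, Finset.mem_insert] at hv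
    obtain ⟨hvi, -, rfl | hvM⟩ := hv
    · simp
    · have := h.inter_marked_subset (i + 1) (by omega) (Finset.mem_inter.mpr ⟨hvi, hvM⟩)
      have hva : v ≠ a := fun hva => h.left_notMem (i + 1) (by omega) (by omega) (hva ▸ hvi)
      simp_all

theorem makerWin : ∀ {L : ℕ} {H : MarkedHypergraph V} {e : ℕ → Finset V} {a : V},
    IsNunchakuIn H e a b (L + 1) → H.MakerWin
  | 0, _, _, _, h => makerWin_of_card_sdiff_marked_le_one (h.mem_edges 0 one_pos)
      (h.subset_verts 0 one_pos) h.card_sdiff_marked_le_one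
  | _ + 1, _, _, _, h => by
    obtain ⟨c, m, hcm, hc, hm, hfree⟩ := h.exists_free_eq_pair
    exact makerWin_of_forcing (h.mem_edges 0 (by omega)) (h.subset_verts 0 (by omega)) hcm hfree
      (h.tail hc hm hcm.symm).makerWin

end IsNunchakuIn

end MB

theorem statement15_general {V : Type} [DecidableEq V] (H : MB.MarkedHypergraph V)
    (hN : ∃ N, MB.MarkedHypergraph.IsSub N H ∧ MB.IsNunchaku N) :
    H.MakerWin := by
  obtain ⟨N, hsub, a, b, L, hL, hpath, hmarked⟩ := hN
  obtain ⟨e, he⟩ := MB.isNunchakuIn_of_isSub hsub hL hpath hmarked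
  obtain ⟨L, rfl⟩ : ∃ L', L = L' + 1 := ⟨L - 1, by omega⟩
  exact he.makerWin

/-- Proposition 3.2: any marked hypergraph containing a nunchaku is a Maker win. -/
theorem statement15 {V : Type} [DecidableEq V] (H : MB.MarkedHypergraph V)
    (hval : H.IsValid) (hN : ∃ N, MB.MarkedHypergraph.IsSub N H ∧ MB.IsNunchaku N) :
    H.MakerWin :=
  statement15_general H hN
end
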